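/- Let θ* ∈ Θ, suppose Wasserstein score functions Φ_{θ*,1},…,Φ_{θ*,d} exist, and suppose there exists a matrix Λ ∈ ℝ^{d×d} such that ∂_{θ_j} log q_{θ*}(x) = Σ_{k=1}^d Λ_{jk} Φ_{θ*,k}(x) for all x ∈ ℝ^p and all j ∈ {1,…,d}. Then for all x ∈ ℝ^p and all j, A_{θ*}(∇_x ∂_{θ_j} log q_{θ*})(x) = −Σ_{k=1}^d Λ_{jk} ∂_{θ_k} log q_{θ*}(x); that is, each score matching estimating function is the same fixed linear combination of the likelihood (Fisher) score functions, so the score matching estimating equations coincide with linear combinations of the maximum likelihood estimating equations. -/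

import Mathlib

open MeasureTheory Real Filter

/-- Partial derivative in the `i`-th coordinate. -/
noncomputable def pdv {n : ℕ} (i : Fin n) (f : (Fin n → ℝ) → ℝ) (x : Fin n → ℝ) : ℝ :=
  deriv (fun t => f (Function.update x i t)) (x i)

/-- Gradient of a scalar function on ℝ^n. -/
noncomputable def gradv {n : ℕ} (f : (Fin n → ℝ) → ℝ) (x : Fin n → ℝ) : Fin n → ℝ :=
  fun i => pdv i f x

/-- Divergence of a vector field on ℝ^n. -/
noncomputable def divv {n : ℕ} (f : (Fin n → ℝ) → (Fin n → ℝ)) (x : Fin n → ℝ) : ℝ :=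
  ∑ i, pdv i (fun y => f y i) x

/-- Divergence-based Stein operator `A_q f = div(q f) / q`. -/
noncomputable def stein {n : ℕ} (q : (Fin n → ℝ) → ℝ) (f : (Fin n → ℝ) → (Fin n → ℝ))
    (x : Fin n → ℝ) : ℝ :=
  divv (fun y i => q y * f y i) x / q x

/-- Gradient (in x) of the `j`-th Fisher score function `∂_{θ_j} log q_θ`. -/
noncomputable def scoreGrad {d p : ℕ} (q : (Fin d → ℝ) → (Fin p → ℝ) → ℝ)
    (θ : Fin d → ℝ) (j : Fin d) (x : Fin p → ℝ) : Fin p → ℝ :=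
  gradv (fun z => pdv j (fun θ' => Real.log (q θ' z)) θ) x


lemma hasDerivAt_update' {n : ℕ} (x : Fin n → ℝ) (i : Fin n) (t₀ : ℝ) :
    HasDerivAt (fun t => Function.update x i t) (Pi.single i 1) t₀ := by
  have h : (fun t : ℝ => Function.update x i t)
      = fun t => x + (t - x i) • (Pi.single i (1:ℝ) : Fin n → ℝ) := by
    funext t
    funext j
    by_cases h : j = i
    · subst h; simp
    · simp [Function.update_of_ne h, Pi.single_eq_of_ne h]
  rw [h]
  simpa using (((hasDerivAt_id t₀).sub_const (x i)).smul_const (Pi.single i (1:ℝ))).const_add x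

lemma hasDerivAt_pdv {n : ℕ} {f : (Fin n → ℝ) → ℝ} {x : Fin n → ℝ} {i : Fin n} {t₀ : ℝ}
    (hf : DifferentiableAt ℝ f (Function.update x i t₀)) :
    HasDerivAt (fun t => f (Function.update x i t))
      (fderiv ℝ f (Function.update x i t₀) (Pi.single i 1)) t₀ :=
  hf.hasFDerivAt.comp_hasDerivAt t₀ (hasDerivAt_update' x i t₀)

lemma pdv_eq {n : ℕ} {f : (Fin n → ℝ) → ℝ} {x : Fin n → ℝ} (i : Fin n)
    (hf : DifferentiableAt ℝ f x) :
    pdv i f x = fderiv ℝ f x (Pi.single i 1) := by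
  have h := hasDerivAt_pdv (f := f) (x := x) (i := i) (t₀ := x i)
    (by simpa [Function.update_eq_self] using hf)
  rw [Function.update_eq_self] at h
  exact h.deriv

lemma contDiff_pdv {n : ℕ} {f : (Fin n → ℝ) → ℝ} (hf : ContDiff ℝ (⊤ : ℕ∞) f) (i : Fin n) :
    ContDiff ℝ (⊤ : ℕ∞) (fun y => pdv i f y) := by
  have h1 : ContDiff ℝ (⊤ : ℕ∞) (fun y => fderiv ℝ f y (Pi.single i 1)) :=
    by
    exact (ContinuousLinearMap.apply ℝ ℝ (Pi.single i (1:ℝ))).contDiff.comp (hf.fderiv_right (m := (⊤ : ℕ∞)) (by exact_mod_cast (le_top : (⊤ : ℕ∞) + 1 ≤ ⊤)))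
  have h2 : (fun y => pdv i f y) = fun y => fderiv ℝ f y (Pi.single i 1) := by
    funext y; exact pdv_eq i (hf.differentiable (by simp) y)
  rw [h2]; exact h1

lemma diffAt_comp_update {n : ℕ} {f : (Fin n → ℝ) → ℝ} (hf : Differentiable ℝ f)
    (x : Fin n → ℝ) (i : Fin n) (t : ℝ) :
    DifferentiableAt ℝ (fun t => f (Function.update x i t)) t :=
  (hf _).comp t (hasDerivAt_update' x i t).differentiableAt

lemma pdv_sum_mul {n : ℕ} {ι : Type*} (s : Finset ι) (c : ι → ℝ) (g : ι → (Fin n → ℝ) → ℝ)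
    (x : Fin n → ℝ) (i : Fin n) (hg : ∀ k, Differentiable ℝ (g k)) :
    pdv i (fun y => ∑ k ∈ s, c k * g k y) x = ∑ k ∈ s, c k * pdv i (g k) x := by
  unfold pdv
  rw [deriv_fun_sum (fun k _ => ((diffAt_comp_update (hg k) x i (x i)).const_mul (c k)))]
  exact Finset.sum_congr rfl fun k _ => by
    rw [deriv_const_mul _ (diffAt_comp_update (hg k) x i (x i))]

/-- if each Fisher score equals a fixed linear combination of the Wasserstein score
functions, `∂_{θⱼ} log q_{θ*} = Σₖ Λ_{jk} Φ_{θ*,k}`, then pointwise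
`A_{θ*}(∇ₓ∂_{θⱼ} log q_{θ*}) = −Σₖ Λ_{jk} ∂_{θₖ} log q_{θ*}`; so the score matching estimating
functions are the same fixed linear combinations of the likelihood score functions. -/
theorem stmt8 {d p : ℕ} (Θ : Set (Fin d → ℝ)) (hΘ : IsOpen Θ)
    (q : (Fin d → ℝ) → (Fin p → ℝ) → ℝ)
    (hpos : ∀ θ x, 0 < q θ x)
    (hsmooth : ContDiff ℝ (⊤ : ℕ∞) (fun pr : (Fin d → ℝ) × (Fin p → ℝ) => q pr.1 pr.2))
    (θs : Fin d → ℝ) (hθs : θs ∈ Θ)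
    -- the Wasserstein score functions Φ_{θ*,1},…,Φ_{θ*,d} exist
    (Φ : Fin d → (Fin p → ℝ) → ℝ) (hΦsm : ∀ k, ContDiff ℝ (⊤ : ℕ∞) (Φ k))
    (hΦpde : ∀ k x, stein (q θs) (fun y => gradv (Φ k) y) x
        = - pdv k (fun θ => Real.log (q θ x)) θs)
    (hΦ0 : ∀ k, ∫ x, q θs x * Φ k x = 0)
    (Λ : Matrix (Fin d) (Fin d) ℝ)
    (hΛ : ∀ j x, pdv j (fun θ => Real.log (q θ x)) θs = ∑ k, Λ j k * Φ k x) :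
    ∀ (j : Fin d) (x : Fin p → ℝ),
      stein (q θs) (scoreGrad q θs j) x
        = - ∑ k, Λ j k * pdv k (fun θ => Real.log (q θ x)) θs := by
  intro j x
  have hq : ContDiff ℝ (⊤ : ℕ∞) (q θs) :=
    hsmooth.comp (contDiff_const.prodMk contDiff_id)
  have hF : ∀ (k : Fin d) (i : Fin p), Differentiable ℝ (fun y => q θs y * pdv i (Φ k) y) :=
    fun k i => (hq.mul (contDiff_pdv (hΦsm k) i)).differentiable (by simp)
  have hscore : ∀ (y : Fin p → ℝ) (i : Fin p),
      scoreGrad q θs j y i = ∑ k, Λ j k * pdv i (Φ k) y := by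
    intro y i
    have h1 : (fun z => pdv j (fun θ' => Real.log (q θ' z)) θs)
        = fun z => ∑ k, Λ j k * Φ k z := by
      funext z; exact hΛ j z
    show pdv i (fun z => pdv j (fun θ' => Real.log (q θ' z)) θs) y = _
    rw [h1]
    exact pdv_sum_mul Finset.univ _ _ y i (fun k => (hΦsm k).differentiable (by simp))
  unfold stein divv
  have h2 : ∀ i : Fin p, (fun y => q θs y * scoreGrad q θs j y i)
      = fun y => ∑ k, Λ j k * (q θs y * pdv i (Φ k) y) := by
    intro i; funext y
    rw [hscore y i, Finset.mul_sum]
    exact Finset.sum_congr rfl fun k _ => by ring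
  have h3 : ∀ i : Fin p, pdv i (fun y => q θs y * scoreGrad q θs j y i) x
      = ∑ k, Λ j k * pdv i (fun y => q θs y * pdv i (Φ k) y) x := by
    intro i
    rw [h2 i]
    exact pdv_sum_mul Finset.univ _ _ x i (fun k => hF k i)
  calc (∑ i, pdv i (fun y => q θs y * scoreGrad q θs j y i) x) / q θs x
      = (∑ i, ∑ k, Λ j k * pdv i (fun y => q θs y * pdv i (Φ k) y) x) / q θs x := by
        rw [Finset.sum_congr rfl fun i _ => h3 i]
    _ = ∑ k, (Λ j k * ∑ i, pdv i (fun y => q θs y * pdv i (Φ k) y) x) / q θs x := by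
        rw [Finset.sum_comm, Finset.sum_div]
        exact Finset.sum_congr rfl fun k _ => by rw [Finset.mul_sum]
    _ = ∑ k, -(Λ j k * pdv k (fun θ => Real.log (q θ x)) θs) := by
        refine Finset.sum_congr rfl fun k _ => ?_
        have h := hΦpde k x
        unfold stein divv gradv at h
        rw [mul_div_assoc, h]; ring
    _ = - ∑ k, Λ j k * pdv k (fun θ => Real.log (q θ x)) θs := by
        rw [Finset.sum_neg_distrib]
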